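/- Every MILP-representable set is a MIC set. More precisely, if S ⊆ ℝ^n is MILP-representable, then there exist finitely many affine Chvátal functions g_i : ℝ^n → ℝ, i ∈ I, such that S = {x ∈ ℝ^n : g_i(x) ≤ 0 for all i ∈ I}. -/

import Mathlib

/-!
Continuous variables are removed one at a time by Fourier–Motzkin elimination, which keeps the
constraints affine. An integer variable `w` is removed as follows. Choose `D > 0` clearing the
denominators of the coefficients of `w` under every ceiling; on the residue class `w = D j + r`
each constraint becomes `a j + g_r(x) ≤ 0` with `g_r` affine Chvátal, since an integer multiple of
`j` can be pulled out of a ceiling. For each residue, `j` is then eliminated by the rounded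
Fourier–Motzkin rule `a_t ⌈g_s / (-a_s)⌉ + g_t ≤ 0` (`a_s < 0 < a_t`). The union of the `D`
resulting sets is cut out by the inequalities `∑_r ⌈h_r / M_r⌉ ≤ D - 1`, one for each choice of a
constraint `h_r` of every residue system, as soon as each `h_r` is bounded above by some `M_r > 0`
on the whole projection. Such bounds exist because moving `w` to another residue changes an affine
Chvátal function by a bounded amount; to make this available recursively, every elimination step
also bounds its output on each relaxation `F ≤ ε` of its input.
-/

/-- Binary tree representation of an affine Chvátal function on `ℝ^n`. -/
inductive ChvatalTree (n : ℕ) : Type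
  | leaf (a : Fin n → ℚ) (c : ℚ) : ChvatalTree n
  | ceil (t : ChvatalTree n) : ChvatalTree n
  | scale (a : ℚ) (t : ChvatalTree n) : ChvatalTree n
  | comb (a b : ℚ) (t₁ t₂ : ChvatalTree n) : ChvatalTree n

namespace ChvatalTree

/-- The function computed by the tree. -/
noncomputable def eval {n : ℕ} : ChvatalTree n → (Fin n → ℝ) → ℝ
  | leaf a c, x => (∑ j, (a j : ℝ) * x j) + (c : ℝ)
  | ceil t, x => (⌈t.eval x⌉ : ℝ)
  | scale a t, x => (a : ℝ) * t.eval x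
  | comb a b t₁ t₂, x => (a : ℝ) * t₁.eval x + (b : ℝ) * t₂.eval x

/-- All multiplicative edge labels are nonnegative rationals. -/
def Valid {n : ℕ} : ChvatalTree n → Prop
  | leaf _ _ => True
  | ceil t => t.Valid
  | scale a t => 0 ≤ a ∧ t.Valid
  | comb a b t₁ t₂ => 0 ≤ a ∧ 0 ≤ b ∧ t₁.Valid ∧ t₂.Valid

/-- The ceiling count of the tree. -/
def cc {n : ℕ} : ChvatalTree n → ℕ
  | leaf _ _ => 0
  | ceil t => t.cc + 1
  | scale _ t => t.cc
  | comb _ _ t₁ t₂ => t₁.cc + t₂.cc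

/-- All leaves are homogeneous linear functions. -/
def Linear {n : ℕ} : ChvatalTree n → Prop
  | leaf _ c => c = 0
  | ceil t => t.Linear
  | scale _ t => t.Linear
  | comb _ _ t₁ t₂ => t₁.Linear ∧ t₂.Linear

end ChvatalTree

/-- `f` is an affine Chvátal function. -/
def IsAffineChvatal {n : ℕ} (f : (Fin n → ℝ) → ℝ) : Prop :=
  ∃ T : ChvatalTree n, T.Valid ∧ ∀ x, T.eval x = f x

/-- `f` is a Chvátal function (all leaves homogeneous linear). -/
def IsChvatal {n : ℕ} (f : (Fin n → ℝ) → ℝ) : Prop :=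
  ∃ T : ChvatalTree n, T.Valid ∧ T.Linear ∧ ∀ x, T.eval x = f x

/-- `S ⊆ ℝ^n` is the projection of a mixed-integer linear set. -/
def MILPRepresentable {n : ℕ} (S : Set (Fin n → ℝ)) : Prop :=
  ∃ (m p q : ℕ) (A : Matrix (Fin m) (Fin n) ℚ) (B : Matrix (Fin m) (Fin p) ℚ)
    (C : Matrix (Fin m) (Fin q) ℚ) (d : Fin m → ℚ),
    S = {x | ∃ (y : Fin p → ℝ) (z : Fin q → ℤ), ∀ i : Fin m,
      (d i : ℝ) ≤ (∑ j, (A i j : ℝ) * x j) + (∑ j, (B i j : ℝ) * y j)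
        + (∑ j, (C i j : ℝ) * (z j : ℝ))}


theorem exists_forall_le_and_forall_le {ι ι' α : Type*} [Finite ι] [Finite ι']
    [ConditionallyCompleteLinearOrder α] [Nonempty α] (l : ι → α) (u : ι' → α)
    (h : ∀ i j, l i ≤ u j) : ∃ y, (∀ i, l i ≤ y) ∧ ∀ j, y ≤ u j := by
  cases isEmpty_or_nonempty ι with
  | inl _ =>
    obtain ⟨y, hy⟩ := Finite.exists_ge u
    exact ⟨y, isEmptyElim, hy⟩
  | inr _ =>
    exact ⟨⨆ i, l i, fun i => le_ciSup (Finite.bddAbove_range l) i, fun j => ciSup_le (h · j)⟩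

section OneVariable

theorem mul_add_nonpos_iff_of_neg {a c y : ℝ} (ha : a < 0) : a * y + c ≤ 0 ↔ c / -a ≤ y := by
  rw [div_le_iff₀ (neg_pos.2 ha)]
  constructor <;> intro h <;> linarith

theorem mul_add_nonpos_iff_of_pos {a c y : ℝ} (ha : 0 < a) : a * y + c ≤ 0 ↔ y ≤ -c / a := by
  rw [le_div_iff₀ ha]
  constructor <;> intro h <;> linarith

variable {ι : Type*} [Finite ι] (a c : ι → ℝ)

theorem exists_real_forall_mul_add_nonpos_iff :
    (∃ y : ℝ, ∀ i, a i * y + c i ≤ 0) ↔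
      (∀ i, a i = 0 → c i ≤ 0) ∧ ∀ s t, a s < 0 → 0 < a t → a t * c s - a s * c t ≤ 0 := by
  constructor
  · rintro ⟨y, hy⟩
    refine ⟨fun i hi => by simpa [hi] using hy i, fun s t hs ht => ?_⟩
    nlinarith [hy s, hy t]
  · rintro ⟨hzero, hpair⟩
    obtain ⟨y, hl, hu⟩ := exists_forall_le_and_forall_le
      (fun s : {s // a s < 0} => c s / -a s) (fun t : {t // 0 < a t} => -c t / a t)
      fun ⟨s, hs⟩ ⟨t, ht⟩ => by
        rw [← mul_add_nonpos_iff_of_pos ht, mul_div_assoc', div_add' _ _ _ (neg_pos.2 hs).ne',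
          div_nonpos_iff]
        exact Or.inr ⟨by linarith [hpair s t hs ht], (neg_pos.2 hs).le⟩
    refine ⟨y, fun i => ?_⟩
    rcases lt_trichotomy (a i) 0 with hi | hi | hi
    · exact (mul_add_nonpos_iff_of_neg hi).2 (hl ⟨i, hi⟩)
    · simpa [hi] using hzero i hi
    · exact (mul_add_nonpos_iff_of_pos hi).2 (hu ⟨i, hi⟩)

theorem exists_int_forall_mul_add_nonpos_iff :
    (∃ j : ℤ, ∀ i, a i * j + c i ≤ 0) ↔
      (∀ i, a i = 0 → c i ≤ 0) ∧ ∀ s t, a s < 0 → 0 < a t → a t * ⌈c s / -a s⌉ + c t ≤ 0 := by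
  constructor
  · rintro ⟨j, hj⟩
    refine ⟨fun i hi => by simpa [hi] using hj i, fun s t hs ht => ?_⟩
    have hceil : (⌈c s / -a s⌉ : ℝ) ≤ j :=
      mod_cast Int.ceil_le.2 ((mul_add_nonpos_iff_of_neg hs).1 (hj s))
    nlinarith [hj t]
  · rintro ⟨hzero, hpair⟩
    obtain ⟨j, hl, hu⟩ := exists_forall_le_and_forall_le
      (fun s : {s // a s < 0} => ⌈c s / -a s⌉) (fun t : {t // 0 < a t} => ⌊-c t / a t⌋)
      fun ⟨s, hs⟩ ⟨t, ht⟩ => Int.le_floor.2 ((mul_add_nonpos_iff_of_pos ht).1 (hpair s t hs ht))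
    refine ⟨j, fun i => ?_⟩
    rcases lt_trichotomy (a i) 0 with hi | hi | hi
    · exact (mul_add_nonpos_iff_of_neg hi).2 (Int.ceil_le.1 (hl ⟨i, hi⟩))
    · simpa [hi] using hzero i hi
    · exact (mul_add_nonpos_iff_of_pos hi).2 (Int.le_floor.1 (hu ⟨i, hi⟩))

end OneVariable

section FourierMotzkin

variable {ι α : Type*} (a : ι → ℚ) (g : ι → α → ℝ)

abbrev FMIndex : Type _ := {i // a i = 0} ⊕ {p : ι × ι // a p.1 < 0 ∧ 0 < a p.2}

def fourierMotzkin : FMIndex a → α → ℝ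
  | .inl i => g i
  | .inr p => fun x => a p.1.2 * g p.1.1 x - a p.1.1 * g p.1.2 x

noncomputable def ceilFourierMotzkin : FMIndex a → α → ℝ
  | .inl i => g i
  | .inr p => fun x => a p.1.2 * ⌈g p.1.1 x / -(a p.1.1 : ℝ)⌉ + g p.1.2 x

theorem fourierMotzkin_nonpos_iff [Finite ι] (x : α) :
    (∀ k, fourierMotzkin a g k x ≤ 0) ↔ ∃ y : ℝ, ∀ i, a i * y + g i x ≤ 0 := by
  rw [exists_real_forall_mul_add_nonpos_iff]
  simp [fourierMotzkin, Sum.forall]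

theorem ceilFourierMotzkin_nonpos_iff [Finite ι] (x : α) :
    (∀ k, ceilFourierMotzkin a g k x ≤ 0) ↔ ∃ j : ℤ, ∀ i, a i * j + g i x ≤ 0 := by
  rw [exists_int_forall_mul_add_nonpos_iff]
  simp [ceilFourierMotzkin, Sum.forall]

theorem exists_fourierMotzkin_le (ε : ℝ) (k : FMIndex a) :
    ∃ δ, ∀ x (y : ℝ), (∀ i, a i * y + g i x ≤ ε) → fourierMotzkin a g k x ≤ δ := by
  rcases k with ⟨i, hi⟩ | ⟨⟨s, t⟩, hs, ht⟩
  · exact ⟨ε, fun x y h => by simpa [fourierMotzkin, hi] using h i⟩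
  · refine ⟨(a t - a s) * ε, fun x y h => ?_⟩
    have hs : (a s : ℝ) < 0 := mod_cast hs
    have ht : (0 : ℝ) < a t := mod_cast ht
    simp only [fourierMotzkin]
    nlinarith [h s, h t]

theorem exists_ceilFourierMotzkin_le (ε : ℝ) (k : FMIndex a) :
    ∃ δ, ∀ x (j : ℤ), (∀ i, a i * j + g i x ≤ ε) → ceilFourierMotzkin a g k x ≤ δ := by
  rcases k with ⟨i, hi⟩ | ⟨⟨s, t⟩, hs, ht⟩
  · exact ⟨ε, fun x j h => by simpa [ceilFourierMotzkin, hi] using h i⟩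
  · refine ⟨a t * ⌈ε / -(a s : ℝ)⌉ + ε, fun x j h => ?_⟩
    have hs : 0 < -(a s : ℝ) := neg_pos.2 (mod_cast hs)
    have ht : (0 : ℝ) ≤ a t := mod_cast ht.le
    have hdiv : g s x / -(a s : ℝ) ≤ ε / -(a s : ℝ) + j := by
      rw [div_add' _ _ _ hs.ne', div_le_div_iff_of_pos_right hs]
      linarith [h s]
    have hceil : (⌈g s x / -(a s : ℝ)⌉ : ℝ) ≤ ⌈ε / -(a s : ℝ)⌉ + j := by
      exact_mod_cast (Int.ceil_le_ceil hdiv).trans_eq (Int.ceil_add_intCast _ _)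
    simp only [ceilFourierMotzkin]
    nlinarith [h t]

end FourierMotzkin

structure CutsOutProjection {α β ω ι κ : Type*} (lift : α → ω → β) (F : ι → β → ℝ)
    (G : κ → α → ℝ) : Prop where
  nonpos_iff : ∀ x, (∀ k, G k x ≤ 0) ↔ ∃ w, ∀ i, F i (lift x w) ≤ 0
  exists_le : ∀ ε k, ∃ δ, ∀ x w, (∀ i, F i (lift x w) ≤ ε) → G k x ≤ δ

def ProjectionCutOut {α β ω ι : Type*} (P : (α → ℝ) → Prop) (lift : α → ω → β)
    (F : ι → β → ℝ) : Prop :=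
  ∃ (κ : Type) (_ : Fintype κ) (G : κ → α → ℝ), (∀ k, P (G k)) ∧ CutsOutProjection lift F G

namespace CutsOutProjection

variable {α β γ ω ω' ι κ μ : Type*} {lift : α → ω → β} {F : ι → β → ℝ} {G : κ → α → ℝ}

theorem comp [Finite κ] {lift' : γ → ω' → α} {H : μ → γ → ℝ} (hG : CutsOutProjection lift F G)
    (hH : CutsOutProjection lift' G H) :
    CutsOutProjection (fun x (p : ω × ω') => lift (lift' x p.2) p.1) F H where
  nonpos_iff x := by
    simp only [hH.nonpos_iff, hG.nonpos_iff, Prod.exists]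
    exact exists_comm
  exists_le ε k := by
    choose δ hδ using hG.exists_le ε
    obtain ⟨δmax, hδmax⟩ := Finite.exists_le δ
    obtain ⟨η, hη⟩ := hH.exists_le δmax k
    exact ⟨η, fun x p hx => hη x p.2 fun k' => (hδ k' _ p.1 hx).trans (hδmax k')⟩

theorem congr_lift {lift' : α → ω' → β} (e : ω ≃ ω') (he : ∀ x w, lift' x (e w) = lift x w)
    (hG : CutsOutProjection lift F G) : CutsOutProjection lift' F G where
  nonpos_iff x := by
    rw [hG.nonpos_iff, ← e.exists_congr_right]
    simp only [he]
  exists_le ε k := by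
    obtain ⟨δ, hδ⟩ := hG.exists_le ε k
    exact ⟨δ, fun x w hx => hδ x (e.symm w) (by simpa [← he] using hx)⟩

end CutsOutProjection

theorem projectionCutOut_append {W : Type} (c : W → ℝ) (P : ∀ N : ℕ, ((Fin N → ℝ) → ℝ) → Prop)
    (step : ∀ (N : ℕ) (ι : Type) [Fintype ι] (F : ι → (Fin (N + 1) → ℝ) → ℝ),
      (∀ i, P (N + 1) (F i)) → ProjectionCutOut (P N) (fun X w => Fin.snoc X (c w)) F)
    (N q : ℕ) {ι : Type} [Fintype ι] (F : ι → (Fin (N + q) → ℝ) → ℝ)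
    (hF : ∀ i, P (N + q) (F i)) :
    ProjectionCutOut (P N) (fun x (z : Fin q → W) => Fin.append x (c ∘ z)) F := by
  induction q generalizing ι with
  | zero =>
    have happend (x : Fin N → ℝ) (z : Fin 0 → W) : Fin.append x (c ∘ z) = x := by
      simp [Fin.append_right_nil x _ rfl]
    refine ⟨ι, inferInstance, F, hF, fun x => ?_, fun ε i => ⟨ε, fun x z hx => ?_⟩⟩
    · simp [happend]
    · simpa [happend] using hx i
  | succ q ih =>
    obtain ⟨κ₁, _, G₁, hG₁, hcut₁⟩ := step (N + q) ι F hF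
    obtain ⟨κ, _, G, hG, hcut⟩ := ih G₁ hG₁
    refine ⟨κ, inferInstance, G, hG, (hcut₁.comp hcut).congr_lift (Fin.snocEquiv fun _ => W) ?_⟩
    intro x p
    show Fin.append x (c ∘ Fin.snoc p.2 p.1) = Fin.snoc (Fin.append x (c ∘ p.2)) (c p.1)
    rw [Fin.comp_snoc, Fin.append_snoc]

theorem exists_forall_nonpos_iff_sum_ceil_le {R κ : Type*} [Fintype R] (v M : R → κ → ℝ)
    (hM : ∀ r k, 0 < M r k) (hvM : (∃ r, ∀ k, v r k ≤ 0) → ∀ r k, v r k ≤ M r k) :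
    (∃ r, ∀ k, v r k ≤ 0) ↔
      ∀ c : R → κ, ∑ r, (⌈v r (c r) / M r (c r)⌉ : ℝ) ≤ Fintype.card R - 1 := by
  constructor
  · intro hex c
    obtain ⟨r₀, h₀⟩ := hex
    have hle_one (r : R) : (⌈v r (c r) / M r (c r)⌉ : ℝ) ≤ 1 :=
      mod_cast Int.ceil_le.2 (by exact_mod_cast (div_le_one (hM r (c r))).2 (hvM ⟨r₀, h₀⟩ r (c r)))
    have hle_zero : (⌈v r₀ (c r₀) / M r₀ (c r₀)⌉ : ℝ) ≤ 0 :=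
      mod_cast Int.ceil_le.2 (by
        exact_mod_cast div_nonpos_of_nonpos_of_nonneg (h₀ (c r₀)) (hM r₀ (c r₀)).le)
    have hsum : 1 ≤ ∑ r, (1 - (⌈v r (c r) / M r (c r)⌉ : ℝ)) :=
      (by linarith : (1 : ℝ) ≤ 1 - ⌈v r₀ (c r₀) / M r₀ (c r₀)⌉).trans
        (Finset.single_le_sum (fun r _ => sub_nonneg.2 (hle_one r)) (Finset.mem_univ r₀))
    rw [Finset.sum_sub_distrib] at hsum
    simp only [Finset.sum_const, Finset.card_univ, nsmul_eq_mul, mul_one] at hsum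
    linarith
  · intro h
    by_contra hne
    push Not at hne
    choose c hc using hne
    have hone (r : R) : (1 : ℝ) ≤ ⌈v r (c r) / M r (c r)⌉ :=
      mod_cast Int.one_le_ceil_iff.2 (div_pos (hc r) (hM r (c r)))
    have := Finset.sum_le_sum fun r (_ : r ∈ Finset.univ) => hone r
    simp only [Finset.sum_const, Finset.card_univ, nsmul_eq_mul, mul_one] at this
    linarith [h c]

theorem cutsOutProjection_sum_ceil {α β ω ι R κ : Type*} [Fintype R] {lift : α → ω → β}
    {F : ι → β → ℝ} (H : R → κ → α → ℝ)
    (hH : ∀ x, (∃ w, ∀ i, F i (lift x w) ≤ 0) ↔ ∃ r, ∀ k, H r k x ≤ 0)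
    (hbdd : ∀ ε r k, ∃ δ, ∀ x w, (∀ i, F i (lift x w) ≤ ε) → H r k x ≤ δ) :
    ∃ M : R → κ → ℕ, (∀ r k, 0 < M r k) ∧ CutsOutProjection lift F
      fun (c : R → κ) x => ∑ r, (⌈H r (c r) x / M r (c r)⌉ : ℝ) - (Fintype.card R - 1) := by
  choose δ hδ using hbdd 0
  choose M hM using fun r k => exists_nat_gt (max (δ r k) 0)
  have hMpos (r : R) (k : κ) : (0 : ℝ) < M r k := (le_max_right _ _).trans_lt (hM r k)
  refine ⟨M, fun r k => mod_cast hMpos r k, fun x => ?_, fun ε c => ?_⟩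
  · rw [hH x, exists_forall_nonpos_iff_sum_ceil_le (fun r k => H r k x) (fun r k => M r k) hMpos]
    · simp only [sub_nonpos]
    · rintro hx r k
      obtain ⟨w, hw⟩ := (hH x).2 hx
      exact (hδ r k x w hw).trans ((le_max_left _ _).trans (hM r k).le)
  · choose η hη using fun r => hbdd ε r (c r)
    refine ⟨∑ r, (η r / M r (c r) + 1) - (Fintype.card R - 1), fun x w hx => ?_⟩
    gcongr with r
    exact (Int.ceil_lt_add_one _).le.trans (by gcongr; exact hη r x w hx)

def IsRatAffine {N : ℕ} (f : (Fin N → ℝ) → ℝ) : Prop :=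
  ∃ (a : Fin N → ℚ) (c : ℚ), ∀ x, f x = ∑ j, (a j : ℝ) * x j + c

namespace IsRatAffine

variable {N : ℕ} {f g : (Fin N → ℝ) → ℝ}

theorem const_mul (hf : IsRatAffine f) (b : ℚ) : IsRatAffine fun x => b * f x := by
  obtain ⟨a, c, hf⟩ := hf
  refine ⟨fun j => b * a j, b * c, fun x => ?_⟩
  simp only [hf, Rat.cast_mul, mul_add, Finset.mul_sum, mul_assoc]

theorem sub (hf : IsRatAffine f) (hg : IsRatAffine g) : IsRatAffine fun x => f x - g x := by
  obtain ⟨a, c, hf⟩ := hf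
  obtain ⟨a', c', hg⟩ := hg
  refine ⟨a - a', c - c', fun x => ?_⟩
  simp only [hf, hg, Pi.sub_apply, Rat.cast_sub, sub_mul, Finset.sum_sub_distrib]
  ring

theorem exists_snoc_eq {f : (Fin (N + 1) → ℝ) → ℝ} (hf : IsRatAffine f) :
    ∃ (b : ℚ) (g : (Fin N → ℝ) → ℝ), IsRatAffine g ∧ ∀ X y, f (Fin.snoc X y) = b * y + g X := by
  obtain ⟨a, c, hf⟩ := hf
  refine ⟨a (Fin.last N), _, ⟨Fin.init a, c, fun _ => rfl⟩, fun X y => ?_⟩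
  simp only [hf, Fin.sum_univ_castSucc, Fin.snoc_castSucc, Fin.snoc_last, Fin.init]
  ring

theorem fourierMotzkin {ι : Type*} {a : ι → ℚ} {g : ι → (Fin N → ℝ) → ℝ}
    (hg : ∀ i, IsRatAffine (g i)) (k : FMIndex a) : IsRatAffine (_root_.fourierMotzkin a g k) := by
  rcases k with ⟨i, -⟩ | ⟨⟨s, t⟩, -⟩
  · exact hg i
  · exact ((hg s).const_mul (a t)).sub ((hg t).const_mul (a s))

end IsRatAffine

namespace IsAffineChvatal

variable {n : ℕ} {f g : (Fin n → ℝ) → ℝ}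

theorem of_isRatAffine (hf : IsRatAffine f) : IsAffineChvatal f := by
  obtain ⟨a, c, hf⟩ := hf
  exact ⟨.leaf a c, trivial, fun x => (hf x).symm⟩

theorem const (c : ℚ) : IsAffineChvatal fun _ : Fin n → ℝ => (c : ℝ) :=
  of_isRatAffine ⟨0, c, fun _ => by simp⟩

theorem ceil (hf : IsAffineChvatal f) : IsAffineChvatal fun x => (⌈f x⌉ : ℝ) := by
  obtain ⟨T, hT, hf⟩ := hf
  exact ⟨.ceil T, hT, fun x => by simp [ChvatalTree.eval, hf]⟩

theorem const_mul (hf : IsAffineChvatal f) {b : ℚ} (hb : 0 ≤ b) :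
    IsAffineChvatal fun x => b * f x := by
  obtain ⟨T, hT, hf⟩ := hf
  exact ⟨.scale b T, ⟨hb, hT⟩, fun x => by simp [ChvatalTree.eval, hf]⟩

theorem div_const (hf : IsAffineChvatal f) {b : ℚ} (hb : 0 ≤ b) :
    IsAffineChvatal fun x => f x / b := by
  simpa [div_eq_inv_mul] using hf.const_mul (inv_nonneg.2 hb)

theorem add (hf : IsAffineChvatal f) (hg : IsAffineChvatal g) :
    IsAffineChvatal fun x => f x + g x := by
  obtain ⟨T, hT, hf⟩ := hf
  obtain ⟨T', hT', hg⟩ := hg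
  exact ⟨.comb 1 1 T T', ⟨zero_le_one, zero_le_one, hT, hT'⟩,
    fun x => by simp [ChvatalTree.eval, hf, hg]⟩

theorem sum {R : Type*} (s : Finset R) {f : R → (Fin n → ℝ) → ℝ}
    (hf : ∀ r ∈ s, IsAffineChvatal (f r)) : IsAffineChvatal fun x => ∑ r ∈ s, f r x := by
  classical
  induction s using Finset.induction_on with
  | empty => simpa using const (n := n) 0
  | insert r s hr ih =>
    simp_rw [Finset.sum_insert hr]
    exact (hf r (Finset.mem_insert_self r s)).add
      (ih fun r' hr' => hf r' (Finset.mem_insert_of_mem hr'))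

@[elab_as_elim]
theorem induction {P : ((Fin n → ℝ) → ℝ) → Prop} (affine : ∀ f, IsRatAffine f → P f)
    (ceil : ∀ f, P f → P fun x => (⌈f x⌉ : ℝ))
    (const_mul : ∀ f (b : ℚ), 0 ≤ b → P f → P fun x => b * f x)
    (add : ∀ f g, P f → P g → P fun x => f x + g x) (hf : IsAffineChvatal f) : P f := by
  obtain ⟨T, hT, rfl⟩ : ∃ T : ChvatalTree n, T.Valid ∧ T.eval = f :=
    hf.imp fun T hT => ⟨hT.1, funext hT.2⟩
  clear hf
  induction T with
  | leaf a c => exact affine _ ⟨a, c, fun _ => rfl⟩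
  | ceil T ih => exact ceil _ (ih hT)
  | scale b T ih => exact const_mul _ b hT.1 (ih hT.2)
  | comb b b' T T' ih ih' =>
    exact add _ _ (const_mul _ b hT.1 (ih hT.2.2.1)) (const_mul _ b' hT.2.1 (ih' hT.2.2.2))

theorem sub_const (hf : IsAffineChvatal f) (c : ℚ) : IsAffineChvatal fun x => f x - c := by
  simpa [sub_eq_add_neg] using hf.add (const (-c))

theorem ceilFourierMotzkin {ι : Type*} {a : ι → ℚ} {g : ι → (Fin n → ℝ) → ℝ}
    (hg : ∀ i, IsAffineChvatal (g i)) (k : FMIndex a) :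
    IsAffineChvatal (ceilFourierMotzkin a g k) := by
  rcases k with ⟨i, -⟩ | ⟨⟨s, t⟩, hs, ht⟩
  · exact hg i
  · simpa [_root_.ceilFourierMotzkin] using
      (((hg s).div_const (neg_nonneg.2 hs.le)).ceil.const_mul ht.le).add (hg t)

theorem exists_le_add_mul_norm (hf : IsAffineChvatal f) :
    ∃ L C : ℝ, 0 ≤ L ∧ ∀ x y, f y ≤ f x + L * ‖y - x‖ + C := by
  refine IsAffineChvatal.induction (fun f hf => ?_) (fun f ih => ?_) (fun f b hb ih => ?_)
    (fun f g ihf ihg => ?_) hf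
  · obtain ⟨a, c, hf⟩ := hf
    refine ⟨∑ j, |(a j : ℝ)|, 0, by positivity, fun x y => ?_⟩
    have hcoord (j : Fin n) : (a j : ℝ) * y j ≤ a j * x j + |(a j : ℝ)| * ‖y - x‖ := by
      have hj : |y j - x j| ≤ ‖y - x‖ := by simpa using norm_le_pi_norm (y - x) j
      nlinarith [le_abs_self ((a j : ℝ) * (y j - x j)), abs_mul (a j : ℝ) (y j - x j),
        mul_le_mul_of_nonneg_left hj (abs_nonneg (a j : ℝ))]
    have hsum := Finset.sum_le_sum fun j (_ : j ∈ Finset.univ) => hcoord j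
    rw [Finset.sum_add_distrib, ← Finset.sum_mul] at hsum
    rw [hf, hf]
    linarith
  · obtain ⟨L, C, hL, h⟩ := ih
    refine ⟨L, C + 1, hL, fun x y => ?_⟩
    linarith [Int.ceil_lt_add_one (f y), Int.le_ceil (f x), h x y]
  · obtain ⟨L, C, hL, h⟩ := ih
    have hb : (0 : ℝ) ≤ b := mod_cast hb
    refine ⟨b * L, b * C, by positivity, fun x y => ?_⟩
    nlinarith [mul_le_mul_of_nonneg_left (h x y) hb]
  · obtain ⟨L, C, hL, hf⟩ := ihf
    obtain ⟨L', C', hL', hg⟩ := ihg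
    refine ⟨L + L', C + C', by positivity, fun x y => ?_⟩
    linarith [hf x y, hg x y]

end IsAffineChvatal

def SplitsOnResidues {N : ℕ} (D : ℕ) (a : ℚ) (f : (Fin (N + 1) → ℝ) → ℝ) : Prop :=
  ∀ r : ℤ, ∃ g : (Fin N → ℝ) → ℝ, IsAffineChvatal g ∧
    ∀ X (j : ℤ), f (Fin.snoc X ((D * j + r : ℤ) : ℝ)) = a * j + g X

namespace SplitsOnResidues

variable {N D : ℕ} {a b : ℚ} {f g : (Fin (N + 1) → ℝ) → ℝ}

theorem mul_right (h : SplitsOnResidues D a f) (k : ℕ) : SplitsOnResidues (D * k) (a * k) f := by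
  intro r
  obtain ⟨g, hg, h⟩ := h r
  refine ⟨g, hg, fun X j => ?_⟩
  have := h X (k * j)
  push_cast at this ⊢
  rw [← mul_assoc] at this
  rw [this]
  ring

theorem ceil {k : ℤ} (h : SplitsOnResidues D k f) :
    SplitsOnResidues D k fun x => (⌈f x⌉ : ℝ) := by
  intro r
  obtain ⟨g, hg, h⟩ := h r
  refine ⟨fun X => ⌈g X⌉, hg.ceil, fun X j => ?_⟩
  dsimp only
  rw [h, Rat.cast_intCast, ← Int.cast_mul, Int.ceil_intCast_add]
  push_cast
  ring

theorem const_mul (h : SplitsOnResidues D a f) {b : ℚ} (hb : 0 ≤ b) :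
    SplitsOnResidues D (b * a) fun x => b * f x := by
  intro r
  obtain ⟨g, hg, h⟩ := h r
  refine ⟨fun X => b * g X, hg.const_mul hb, fun X j => ?_⟩
  dsimp only
  rw [h]
  push_cast
  ring

theorem add (hf : SplitsOnResidues D a f) (hg : SplitsOnResidues D b g) :
    SplitsOnResidues D (a + b) fun x => f x + g x := by
  intro r
  obtain ⟨f', hf', hf⟩ := hf r
  obtain ⟨g', hg', hg⟩ := hg r
  refine ⟨fun X => f' X + g' X, hf'.add hg', fun X j => ?_⟩
  dsimp only
  rw [hf, hg]
  push_cast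
  ring

end SplitsOnResidues

theorem IsRatAffine.splitsOnResidues {N : ℕ} {f : (Fin (N + 1) → ℝ) → ℝ} (hf : IsRatAffine f) :
    ∃ a, SplitsOnResidues 1 a f := by
  obtain ⟨b, g, hg, hfg⟩ := hf.exists_snoc_eq
  refine ⟨b, fun r => ⟨fun X => g X + (b * r : ℚ), (IsAffineChvatal.of_isRatAffine hg).add
    (IsAffineChvatal.const _), fun X j => ?_⟩⟩
  rw [hfg]
  push_cast
  ring

theorem IsAffineChvatal.exists_splitsOnResidues {N : ℕ} {f : (Fin (N + 1) → ℝ) → ℝ}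
    (hf : IsAffineChvatal f) : ∃ D a, 0 < D ∧ SplitsOnResidues D a f := by
  refine IsAffineChvatal.induction (fun f hf => ?_) (fun f ih => ?_) (fun f b hb ih => ?_)
    (fun f g ihf ihg => ?_) hf
  · obtain ⟨a, h⟩ := hf.splitsOnResidues
    exact ⟨1, a, one_pos, h⟩
  · obtain ⟨D, a, hD, h⟩ := ih
    refine ⟨D * a.den, a.num, Nat.mul_pos hD a.den_pos, ?_⟩
    have h' : SplitsOnResidues (D * a.den) (a.num : ℚ) f := by
      simpa [Rat.mul_den_eq_num] using h.mul_right a.den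
    exact h'.ceil
  · obtain ⟨D, a, hD, h⟩ := ih
    exact ⟨D, b * a, hD, h.const_mul hb⟩
  · obtain ⟨D, a, hD, hf⟩ := ihf
    obtain ⟨D', a', hD', hg⟩ := ihg
    refine ⟨D * D', a * D' + a' * D, Nat.mul_pos hD hD', (hf.mul_right D').add ?_⟩
    simpa [mul_comm D] using hg.mul_right D

theorem exists_splitsOnResidues_of_fintype {N : ℕ} {ι : Type*} [Fintype ι]
    (F : ι → (Fin (N + 1) → ℝ) → ℝ) (hF : ∀ i, IsAffineChvatal (F i)) :
    ∃ D, 0 < D ∧ ∃ a : ι → ℚ, ∀ i, SplitsOnResidues D (a i) (F i) := by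
  classical
  choose D a hD h using fun i => (hF i).exists_splitsOnResidues
  refine ⟨∏ i, D i, Finset.prod_pos fun i _ => hD i,
    fun i => a i * (∏ i' ∈ Finset.univ.erase i, D i' : ℕ), fun i => ?_⟩
  simpa [Finset.mul_prod_erase] using (h i).mul_right (∏ i' ∈ Finset.univ.erase i, D i')

theorem exists_int_iff_exists_residue {D : ℕ} (hD : 0 < D) (p : ℤ → Prop) :
    (∃ w, p w) ↔ ∃ (r : Fin D) (j : ℤ), p (D * j + r) := by
  refine ⟨fun ⟨w, hw⟩ => ?_, fun ⟨r, j, h⟩ => ⟨_, h⟩⟩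
  have hr : 0 ≤ w % D := Int.emod_nonneg w (by positivity)
  refine ⟨⟨(w % D).toNat, by have := Int.emod_lt_of_pos w (by positivity : (0 : ℤ) < D); omega⟩,
    w / D, ?_⟩
  simpa [Int.toNat_of_nonneg hr, Int.mul_ediv_add_emod] using hw

theorem abs_residue_sub_le {D : ℕ} (hD : 0 < D) (w : ℤ) (r : Fin D) :
    |((D * (w / D) + r : ℤ) : ℝ) - w| ≤ D := by
  have h₀ := Int.emod_nonneg w (by positivity : (D : ℤ) ≠ 0)
  have h₁ := Int.emod_lt_of_pos w (by positivity : (0 : ℤ) < D)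
  have h₂ := Int.mul_ediv_add_emod w D
  have : |D * (w / D) + r - w| ≤ (D : ℤ) := abs_le.2 ⟨by omega, by omega⟩
  exact_mod_cast this

theorem norm_snoc_sub_snoc_le {N : ℕ} (X : Fin N → ℝ) (s t : ℝ) :
    ‖(Fin.snoc X s : Fin (N + 1) → ℝ) - Fin.snoc X t‖ ≤ |s - t| := by
  refine (pi_norm_le_iff_of_nonneg (abs_nonneg _)).2 fun j => ?_
  induction j using Fin.lastCases with
  | last => simp
  | cast j => simp

theorem IsRatAffine.projectionCutOut_snoc {N : ℕ} {ι : Type} [Fintype ι]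
    (F : ι → (Fin (N + 1) → ℝ) → ℝ) (hF : ∀ i, IsRatAffine (F i)) :
    ProjectionCutOut IsRatAffine (fun X (y : ℝ) => Fin.snoc X y) F := by
  choose a g hg hFg using fun i => (hF i).exists_snoc_eq
  refine ⟨FMIndex a, inferInstance, _root_.fourierMotzkin a g, IsRatAffine.fourierMotzkin hg,
    fun X => ?_, fun ε k => ?_⟩
  · simp only [hFg, fourierMotzkin_nonpos_iff]
  · simpa only [hFg] using exists_fourierMotzkin_le a g ε k

theorem IsAffineChvatal.projectionCutOut_snoc {N : ℕ} {ι : Type} [Fintype ι]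
    (F : ι → (Fin (N + 1) → ℝ) → ℝ) (hF : ∀ i, IsAffineChvatal (F i)) :
    ProjectionCutOut IsAffineChvatal (fun X (w : ℤ) => Fin.snoc X (w : ℝ)) F := by
  obtain ⟨D, hD, a, hsplit⟩ := exists_splitsOnResidues_of_fintype F hF
  choose g hg hFg using fun i (r : Fin D) => hsplit i r
  let H (r : Fin D) : FMIndex a → (Fin N → ℝ) → ℝ := _root_.ceilFourierMotzkin a fun i => g i r
  have hH (X : Fin N → ℝ) :
      (∃ w : ℤ, ∀ i, F i (Fin.snoc X w) ≤ 0) ↔ ∃ r, ∀ k, H r k X ≤ 0 := by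
    rw [exists_int_iff_exists_residue hD]
    simp only [H, ceilFourierMotzkin_nonpos_iff, hFg]
  have hbdd (ε : ℝ) (r : Fin D) (k : FMIndex a) :
      ∃ δ, ∀ X (w : ℤ), (∀ i, F i (Fin.snoc X w) ≤ ε) → H r k X ≤ δ := by
    choose L C hL hLC using fun i => (hF i).exists_le_add_mul_norm
    obtain ⟨K, hK⟩ := Finite.exists_le fun i => L i * D + C i
    obtain ⟨δ, hδ⟩ := exists_ceilFourierMotzkin_le a (fun i => g i r) (ε + K) k
    refine ⟨δ, fun X w hw => hδ X (w / D) fun i => ?_⟩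
    rw [← hFg]
    have hnorm := (norm_snoc_sub_snoc_le X _ _).trans (abs_residue_sub_le hD w r)
    nlinarith [hLC i (Fin.snoc X w) (Fin.snoc X ((D * (w / D) + r : ℤ) : ℝ)), hw i, hK i,
      mul_le_mul_of_nonneg_left hnorm (hL i)]
  obtain ⟨M, hM, hcut⟩ := cutsOutProjection_sum_ceil H hH hbdd
  refine ⟨Fin D → FMIndex a, inferInstance, _, fun c => ?_, hcut⟩
  have hterm (r : Fin D) : IsAffineChvatal fun X => (⌈H r (c r) X / M r (c r)⌉ : ℝ) := by
    simpa using ((IsAffineChvatal.ceilFourierMotzkin (hg · r) (c r)).div_const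
      (Nat.cast_nonneg (α := ℚ) (M r (c r)))).ceil
  simpa using (IsAffineChvatal.sum Finset.univ fun r _ => hterm r).sub_const (D - 1)

/-- Every MILP-representable set `S ⊆ ℝ^n` is a MIC set: there are
finitely many affine Chvátal functions `gᵢ` with `S = {x : gᵢ(x) ≤ 0 for all i}`. -/
theorem milp_representable_is_mic {n : ℕ} (S : Set (Fin n → ℝ))
    (hS : MILPRepresentable S) :
    ∃ (N : ℕ) (g : Fin N → ChvatalTree n),
      (∀ i, (g i).Valid) ∧ S = {x | ∀ i, (g i).eval x ≤ 0} := by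
  obtain ⟨m, p, q, A, B, C, d, rfl⟩ := hS
  -- The variables are ordered `(x, z, y)`, so that the continuous `y` are eliminated first,
  -- while the constraints are still affine.
  let F (i : Fin m) (v : Fin (n + q + p) → ℝ) : ℝ :=
    ∑ j, ((-Fin.append (Fin.append (A i) (C i)) (B i) j : ℚ) : ℝ) * v j + d i
  have hF (i : Fin m) (x : Fin n → ℝ) (y : Fin p → ℝ) (z : Fin q → ℤ) :
      F i (Fin.append (Fin.append x (Int.cast ∘ z)) (id ∘ y)) =
        d i - ((∑ j, (A i j : ℝ) * x j) + (∑ j, (B i j : ℝ) * y j) + ∑ j, (C i j : ℝ) * z j) := by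
    simp only [F, Fin.sum_univ_add, Fin.append_left, Fin.append_right]
    push_cast
    simp only [neg_mul, Finset.sum_neg_distrib, Function.comp_apply, id]
    ring
  obtain ⟨κ, _, G, hG, hcutG⟩ := projectionCutOut_append id (fun _ => IsRatAffine)
    (fun _ _ _ => IsRatAffine.projectionCutOut_snoc) (n + q) p F fun i => ⟨_, _, fun _ => rfl⟩
  obtain ⟨μ, _, H, hH, hcutH⟩ := projectionCutOut_append Int.cast (fun _ => IsAffineChvatal)
    (fun _ _ _ => IsAffineChvatal.projectionCutOut_snoc) n q G
    fun k => .of_isRatAffine (hG k)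
  choose T hT hTH using hH
  let e := Fintype.equivFin μ
  refine ⟨Fintype.card μ, fun i => T (e.symm i), fun i => hT _, Set.ext fun x => ?_⟩
  refine Iff.trans ?_ (e.forall_congr_left (p := fun k => (T k).eval x ≤ 0))
  simp only [Set.mem_ofPred_eq, hTH, hcutH.nonpos_iff, hcutG.nonpos_iff, hF, sub_nonpos]
  exact exists_comm
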